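/- Let (X,φ) and (Y,ψ) be Smale spaces that are asymptotically continuous orbit equivalent via a homeomorphism h : X → Y with cocycle data (c₁, c₂, d₁, d₂). Then: (i) if x ∈ X is an asymptotic p-periodic point (p ∈ ℤ, p ≠ 0), then (ψ^{c_h^p(x)}(h(x)), h(x)) ∈ G_ψ^a, where c_h^p(x) := c₁^p(x) + d₁(φ^p(x), x); in particular, if c_h^p(x) ≠ 0, then h(x) is an asymptotic c_h^p(x)-periodic point of (Y,ψ); (ii) if x is a p-periodic point (φ^p(x) = x), then d₁(φ^p(x),x) = 0 and (ψ^{c₁^p(x)}(h(x)), h(x)) ∈ G_ψ^a. -/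

import Mathlib

open Filter Set Topology

noncomputable section

/-- Integer iterate of a homeomorphism. -/
def hIter {X : Type*} [TopologicalSpace X] (φ : X ≃ₜ X) (n : ℤ) (x : X) : X :=
  ((φ.toEquiv : Equiv.Perm X) ^ n) x

/-- The cocycle sums `f^n` of a function `f : X → ℤ` along the iterates of `φ`:
`f^n(x) = Σ_{i=0}^{n-1} f(φ^i(x))` for `n > 0`, `f^0 = 0`, and
`f^n(x) = −Σ_{i=n}^{-1} f(φ^i(x))` for `n < 0`. -/
def cSum {X : Type*} [TopologicalSpace X] (φ : X ≃ₜ X) (f : X → ℤ) (n : ℤ) (x : X) : ℤ :=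
  if 0 ≤ n then ∑ i ∈ Finset.range n.toNat, f (hIter φ i x)
  else -∑ i ∈ Finset.range (-n).toNat, f (hIter φ (n + i) x)

/-- Stable asymptotic pairs (limit definition). -/
def asympS {X : Type*} [MetricSpace X] (φ : X ≃ₜ X) : Set (X × X) :=
  {p | Tendsto (fun n : ℕ => dist (hIter φ n p.1) (hIter φ n p.2)) atTop (nhds 0)}

/-- Unstable asymptotic pairs (limit definition). -/
def asympU {X : Type*} [MetricSpace X] (φ : X ≃ₜ X) : Set (X × X) :=
  {p | Tendsto (fun n : ℕ => dist (hIter φ (-(n : ℤ)) p.1) (hIter φ (-(n : ℤ)) p.2))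
    atTop (nhds 0)}

/-- Asymptotic pairs (limit definition). -/
def asympA {X : Type*} [MetricSpace X] (φ : X ≃ₜ X) : Set (X × X) := asympS φ ∩ asympU φ

/-- The `ω`-limit set of `x`. -/
def omegaSet {X : Type*} [MetricSpace X] (φ : X ≃ₜ X) (x : X) : Set X :=
  {z | ∃ n : ℕ → ℕ, StrictMono n ∧ Tendsto (fun i => hIter φ (n i) x) atTop (nhds z)}

/-- The `α`-limit set of `x`. -/
def alphaSet {X : Type*} [MetricSpace X] (φ : X ≃ₜ X) (x : X) : Set X :=
  {z | ∃ n : ℕ → ℤ, StrictAnti n ∧ Tendsto (fun i => hIter φ (n i) x) atTop (nhds z)}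

/-- A Smale space structure on a compact metric space `X`. -/
structure SmaleSpace (X : Type*) [MetricSpace X] [CompactSpace X] where
  phi : X ≃ₜ X
  eps : ℝ
  lam : ℝ
  br : X → X → X
  eps_pos : 0 < eps
  lam_pos : 0 < lam
  lam_lt_one : lam < 1
  br_cont : ContinuousOn (fun p : X × X => br p.1 p.2) {p : X × X | dist p.1 p.2 < eps}
  br_self : ∀ x : X, br x x = x
  br_assoc_left : ∀ x y z : X, dist x y < eps → dist (br x y) z < eps → dist x z < eps →
    br (br x y) z = br x z
  br_assoc_right : ∀ x y z : X, dist y z < eps → dist x (br y z) < eps → dist x z < eps →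
    br x (br y z) = br x z
  phi_br : ∀ x y : X, dist x y < eps → dist (phi x) (phi y) < eps →
    phi (br x y) = br (phi x) (phi y)
  contract_s : ∀ x y z : X, br y x = y → dist x y < eps → br z x = z → dist x z < eps →
    dist (phi y) (phi z) ≤ lam * dist y z
  contract_u : ∀ x y z : X, br x y = y → dist x y < eps → br x z = z → dist x z < eps →
    dist (phi.symm y) (phi.symm z) ≤ lam * dist y z

namespace SmaleSpace

variable {X Y : Type*} [MetricSpace X] [CompactSpace X] [MetricSpace Y] [CompactSpace Y]

/-- Local stable set `X^s(x,ε)`. -/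
def Xs (S : SmaleSpace X) (x : X) (ε : ℝ) : Set X := {y | S.br y x = y ∧ dist x y < ε}

/-- Local unstable set `X^u(x,ε)`. -/
def Xu (S : SmaleSpace X) (x : X) (ε : ℝ) : Set X := {y | S.br x y = y ∧ dist x y < ε}

def Gs0 (S : SmaleSpace X) : Set (X × X) := {p | p.2 ∈ S.Xs p.1 S.eps}

def Gu0 (S : SmaleSpace X) : Set (X × X) := {p | p.2 ∈ S.Xu p.1 S.eps}

/-- `G_φ^{s,n} = (φ×φ)^{-n}(G_φ^{s,0})`. -/
def GsN (S : SmaleSpace X) (n : ℤ) : Set (X × X) :=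
  {p | (hIter S.phi n p.1, hIter S.phi n p.2) ∈ S.Gs0}

/-- `G_φ^{u,n} = (φ×φ)^{n}(G_φ^{u,0})`. -/
def GuN (S : SmaleSpace X) (n : ℤ) : Set (X × X) :=
  {p | (hIter S.phi (-n) p.1, hIter S.phi (-n) p.2) ∈ S.Gu0}

def GaN (S : SmaleSpace X) (n : ℤ) : Set (X × X) := S.GsN n ∩ S.GuN n

/-- The asymptotic equivalence relation `G_φ^a = ⋃_{n ≥ 0} G_φ^{a,n}`. -/
def Ga (S : SmaleSpace X) : Set (X × X) := ⋃ n : ℕ, S.GaN n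

lemma gaN_subset_ga (S : SmaleSpace X) (n : ℕ) : S.GaN n ⊆ S.Ga :=
  Set.subset_iUnion (fun k : ℕ => S.GaN k) n

/-- The inductive limit topology on `G_φ^a`: a set is open iff its intersection with each
`G_φ^{a,n}` is open in the subspace topology from `X × X`. -/
def gaTopology (S : SmaleSpace X) : TopologicalSpace ↥S.Ga :=
  ⨆ n : ℕ, TopologicalSpace.coinduced (Set.inclusion (S.gaN_subset_ga n)) inferInstance

/-- Irreducibility of a Smale space. -/
def Irreducible (S : SmaleSpace X) : Prop :=
  ∀ U V : Set X, IsOpen U → U.Nonempty → IsOpen V → V.Nonempty →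
    ∃ K : ℕ, ((hIter S.phi K '' U) ∩ V).Nonempty

def IsPeriodicPoint (S : SmaleSpace X) (x : X) : Prop :=
  ∃ p : ℕ, 0 < p ∧ hIter S.phi p x = x

/-- `h` is a flip conjugacy between `(X,φ)` and `(Y,ψ)`. -/
def IsFlipConjugacy (S : SmaleSpace X) (T : SmaleSpace Y) (h : X ≃ₜ Y) : Prop :=
  (∀ x, h (S.phi x) = T.phi (h x)) ∨ (∀ x, h (S.phi x) = T.phi.symm (h x))

def FlipConjugate (S : SmaleSpace X) (T : SmaleSpace Y) : Prop :=
  ∃ h : X ≃ₜ Y, IsFlipConjugacy S T h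

/-- An isomorphism of the principal étale groupoids `G_φ^a` and `G_ψ^a`:
a bijection which is a homeomorphism for the inductive limit topologies and preserves
the (equivalence relation) groupoid structure. -/
structure GaIso (S : SmaleSpace X) (T : SmaleSpace Y) where
  toEquiv : ↥S.Ga ≃ ↥T.Ga
  cont : @Continuous _ _ S.gaTopology T.gaTopology toEquiv
  cont_symm : @Continuous _ _ T.gaTopology S.gaTopology toEquiv.symm
  map_mul : ∀ p q r : ↥S.Ga, (p : X × X).2 = (q : X × X).1 →
    (r : X × X) = ((p : X × X).1, (q : X × X).2) →
    (toEquiv p : Y × Y).2 = (toEquiv q : Y × Y).1 ∧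
      (toEquiv r : Y × Y) = ((toEquiv p : Y × Y).1, (toEquiv q : Y × Y).2)

end SmaleSpace

namespace SmaleSpace

variable {X Y : Type*} [MetricSpace X] [CompactSpace X] [MetricSpace Y] [CompactSpace Y]

/-- The data of an asymptotic continuous orbit equivalence between two Smale spaces
`(X,φ)` and `(Y,ψ)`: a homeomorphism `h : X → Y`, continuous functions `c₁ : X → ℤ`,
`c₂ : Y → ℤ` and continuous two-cocycle functions `d₁ : G_φ^a → ℤ`, `d₂ : G_ψ^a → ℤ`
satisfying conditions (1), (2) and (i)–(viii) of the definition of asymptotic continuous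
orbit equivalence. -/
structure ACOEData (S : SmaleSpace X) (T : SmaleSpace Y) where
  h : X ≃ₜ Y
  c₁ : X → ℤ
  c₂ : Y → ℤ
  d₁ : X → X → ℤ
  d₂ : Y → Y → ℤ
  c₁_cont : Continuous c₁
  c₂_cont : Continuous c₂
  d₁_cocycle : ∀ x z w : X, (x, z) ∈ S.Ga → (z, w) ∈ S.Ga → d₁ x z + d₁ z w = d₁ x w
  d₂_cocycle : ∀ y w v : Y, (y, w) ∈ T.Ga → (w, v) ∈ T.Ga → d₂ y w + d₂ w v = d₂ y v
  d₁_cont : @Continuous ↥S.Ga ℤ S.gaTopology _ fun p => d₁ (p : X × X).1 (p : X × X).2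
  d₂_cont : @Continuous ↥T.Ga ℤ T.gaTopology _ fun p => d₂ (p : Y × Y).1 (p : Y × Y).2
  cocycle_eq₁ : ∀ (m : ℤ) (x z : X), (x, z) ∈ S.Ga →
    cSum S.phi c₁ m x + d₁ (hIter S.phi m x) (hIter S.phi m z)
      = cSum S.phi c₁ m z + d₁ x z
  cocycle_eq₂ : ∀ (m : ℤ) (y w : Y), (y, w) ∈ T.Ga →
    cSum T.phi c₂ m y + d₂ (hIter T.phi m y) (hIter T.phi m w)
      = cSum T.phi c₂ m w + d₂ y w
  xi₁_mem : ∀ (n : ℤ) (x : X),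
    (hIter T.phi (cSum S.phi c₁ n x) (h x), h (hIter S.phi n x)) ∈ T.Ga
  xi₁_cont : ∀ n : ℤ, @Continuous X ↥T.Ga _ T.gaTopology
    fun x => ⟨(hIter T.phi (cSum S.phi c₁ n x) (h x), h (hIter S.phi n x)), xi₁_mem n x⟩
  xi₂_mem : ∀ (n : ℤ) (y : Y),
    (hIter S.phi (cSum T.phi c₂ n y) (h.symm y), h.symm (hIter T.phi n y)) ∈ S.Ga
  xi₂_cont : ∀ n : ℤ, @Continuous Y ↥S.Ga _ S.gaTopology
    fun y => ⟨(hIter S.phi (cSum T.phi c₂ n y) (h.symm y), h.symm (hIter T.phi n y)),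
      xi₂_mem n y⟩
  eta₁_mem : ∀ x z : X, (x, z) ∈ S.Ga → (hIter T.phi (d₁ x z) (h x), h z) ∈ T.Ga
  eta₁_cont : @Continuous ↥S.Ga ↥T.Ga S.gaTopology T.gaTopology
    fun p => ⟨(hIter T.phi (d₁ (p : X × X).1 (p : X × X).2) (h (p : X × X).1),
      h (p : X × X).2), eta₁_mem (p : X × X).1 (p : X × X).2 p.2⟩
  eta₂_mem : ∀ y w : Y, (y, w) ∈ T.Ga → (hIter S.phi (d₂ y w) (h.symm y), h.symm w) ∈ S.Ga
  eta₂_cont : @Continuous ↥T.Ga ↥S.Ga T.gaTopology S.gaTopology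
    fun p => ⟨(hIter S.phi (d₂ (p : Y × Y).1 (p : Y × Y).2) (h.symm (p : Y × Y).1),
      h.symm (p : Y × Y).2), eta₂_mem (p : Y × Y).1 (p : Y × Y).2 p.2⟩
  cond_v : ∀ (n : ℤ) (x : X),
    cSum T.phi c₂ (cSum S.phi c₁ n x) (h x)
      + d₂ (hIter T.phi (cSum S.phi c₁ n x) (h x)) (h (hIter S.phi n x)) = n
  cond_vi : ∀ (n : ℤ) (y : Y),
    cSum S.phi c₁ (cSum T.phi c₂ n y) (h.symm y)
      + d₁ (hIter S.phi (cSum T.phi c₂ n y) (h.symm y)) (h.symm (hIter T.phi n y)) = n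
  cond_vii : ∀ x z : X, (x, z) ∈ S.Ga →
    cSum T.phi c₂ (d₁ x z) (h x) + d₂ (hIter T.phi (d₁ x z) (h x)) (h z) = 0
  cond_viii : ∀ y w : Y, (y, w) ∈ T.Ga →
    cSum S.phi c₁ (d₂ y w) (h.symm y) + d₁ (hIter S.phi (d₂ y w) (h.symm y)) (h.symm w) = 0

/-- Asymptotic continuous orbit equivalence of Smale spaces. -/
def ACOE (S : SmaleSpace X) (T : SmaleSpace Y) : Prop := Nonempty (ACOEData S T)

/-- Asymptotic flip conjugacy: asymptotic continuous orbit equivalence in which the cocycle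
data can be chosen as `c₁ ≡ 1, c₂ ≡ 1, d₁ ≡ 0, d₂ ≡ 0` or as
`c₁ ≡ −1, c₂ ≡ −1, d₁ ≡ 0, d₂ ≡ 0`. -/
def AsymptoticallyFlipConjugate (S : SmaleSpace X) (T : SmaleSpace Y) : Prop :=
  ∃ A : ACOEData S T,
    (A.c₁ = (fun _ => 1) ∧ A.c₂ = (fun _ => 1) ∧
      A.d₁ = (fun _ _ => 0) ∧ A.d₂ = (fun _ _ => 0)) ∨
    (A.c₁ = (fun _ => -1) ∧ A.c₂ = (fun _ => -1) ∧
      A.d₁ = (fun _ _ => 0) ∧ A.d₂ = (fun _ _ => 0))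

end SmaleSpace

/-!
For (i), condition ξ₁ gives `ψ^{c₁^p(x)}(h x) ~ h(φ^p x)` and condition η₁, applied to the
asymptotic pair `(φ^p x, x)`, gives `ψ^{d₁(φ^p x, x)}(h(φ^p x)) ~ h x`. Applying
`ψ^{d₁(φ^p x, x)}` to the first pair and composing with the second gives the claim, once `G^a` is
known to be reflexive, transitive and invariant under `ψ × ψ`. Transitivity is the only point
with content: far enough along the orbit both pairs lie in local stable sets at distance `< ε/2`,
and the bracket identities put the composite pair in a local stable set as well; the unstable
half is the stable half of the time-reversed Smale space `(X, φ⁻¹, [y, x])`.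
-/

section Iterates

variable {X : Type*} [TopologicalSpace X] (φ : X ≃ₜ X)

lemma hIter_add (m n : ℤ) (x : X) : hIter φ (m + n) x = hIter φ m (hIter φ n x) := by
  simp only [hIter, zpow_add, Equiv.Perm.mul_apply]

lemma hIter_succ (n : ℤ) (x : X) : hIter φ (n + 1) x = φ (hIter φ n x) := by
  rw [add_comm, hIter_add]
  simp [hIter]

lemma hIter_symm (n : ℤ) (x : X) : hIter φ.symm n x = hIter φ (-n) x := by
  simp only [hIter, zpow_neg, ← inv_zpow]
  rfl

end Iterates

namespace SmaleSpace

variable {X : Type*} [MetricSpace X] [CompactSpace X] (S : SmaleSpace X)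

def reverse : SmaleSpace X where
  phi := S.phi.symm
  eps := S.eps
  lam := S.lam
  br x y := S.br y x
  eps_pos := S.eps_pos
  lam_pos := S.lam_pos
  lam_lt_one := S.lam_lt_one
  br_cont := S.br_cont.comp continuous_swap.continuousOn fun p hp => by
    simpa [dist_comm] using hp
  br_self := S.br_self
  br_assoc_left x y z hxy hyz hxz := by
    rw [dist_comm] at hxy hyz hxz
    exact S.br_assoc_right z y x hxy hyz hxz
  br_assoc_right x y z hyz hxy hxz := by
    rw [dist_comm] at hyz hxy hxz
    exact S.br_assoc_left z y x hyz hxy hxz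
  phi_br x y hxy hxy' := by
    rw [dist_comm] at hxy hxy'
    apply S.phi.injective
    rw [S.phi_br _ _ hxy' (by simpa using hxy)]
    simp
  contract_s := S.contract_u
  contract_u x y z := by simpa using S.contract_s x y z

lemma gsN_reverse (n : ℤ) : S.reverse.GsN n = S.GuN n := by
  ext p
  simp only [GsN, GuN, reverse, hIter_symm]
  rfl

lemma gs0_phi {u v : X} (h : (u, v) ∈ S.Gs0) :
    (S.phi u, S.phi v) ∈ S.Gs0 ∧ dist (S.phi u) (S.phi v) ≤ S.lam * dist u v := by
  obtain ⟨hbr, hd⟩ := h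
  have hcontr : dist (S.phi u) (S.phi v) ≤ S.lam * dist u v := by
    rw [dist_comm, dist_comm u]
    exact S.contract_s u v u hbr hd (S.br_self u) (by simpa using S.eps_pos)
  have hd' : dist (S.phi u) (S.phi v) < S.eps :=
    hcontr.trans_lt <| (mul_le_of_le_one_left dist_nonneg S.lam_lt_one.le).trans_lt hd
  rw [dist_comm] at hd hd'
  refine ⟨⟨?_, by rwa [dist_comm]⟩, hcontr⟩
  rw [← S.phi_br v u hd hd', hbr]

lemma gsN_add_natCast {n : ℤ} {p : X × X} (hp : p ∈ S.GsN n) (k : ℕ) :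
    p ∈ S.GsN (n + k) ∧
      dist (hIter S.phi (n + k) p.1) (hIter S.phi (n + k) p.2) ≤ S.lam ^ k * S.eps := by
  induction k with
  | zero => simpa using ⟨hp, hp.2.le⟩
  | succ k ih =>
    obtain ⟨hmem, hdist⟩ := S.gs0_phi ih.1
    rw [Nat.cast_succ, ← add_assoc, pow_succ', mul_assoc]
    simp only [GsN, hIter_succ]
    exact ⟨hmem, hdist.trans (mul_le_mul_of_nonneg_left ih.2 S.lam_pos.le)⟩

lemma gsN_mono : Monotone S.GsN :=
  monotone_int_of_le_succ fun _ _ hp => by simpa using (S.gsN_add_natCast hp 1).1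

lemma guN_mono : Monotone S.GuN := by
  rw [show S.GuN = S.reverse.GsN from funext fun n => (S.gsN_reverse n).symm]
  exact S.reverse.gsN_mono

lemma gs0_trans {a b c : X} (hab : (a, b) ∈ S.Gs0) (hbc : (b, c) ∈ S.Gs0)
    (hdist : dist a b + dist b c < S.eps) : (a, c) ∈ S.Gs0 := by
  obtain ⟨hba, dab⟩ := hab
  obtain ⟨hcb, dbc⟩ := hbc
  have dac : dist a c < S.eps := (dist_triangle a b c).trans_lt hdist
  have hassoc : S.br c (S.br b a) = S.br c a :=
    S.br_assoc_right c b a (by rwa [dist_comm]) (by rwa [hba, dist_comm])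
      (by rwa [dist_comm])
  exact ⟨by rw [← hassoc, hba, hcb], dac⟩

lemma gsN_trans {x z w : X} {n m : ℤ} (hxz : (x, z) ∈ S.GsN n) (hzw : (z, w) ∈ S.GsN m) :
    ∃ k, (x, w) ∈ S.GsN k := by
  obtain ⟨k, hk⟩ := exists_pow_lt_of_lt_one one_half_pos S.lam_lt_one
  replace hk : S.lam ^ k * S.eps < S.eps / 2 := by
    nlinarith [S.eps_pos]
  obtain ⟨hxz, dxz⟩ := S.gsN_add_natCast (S.gsN_mono (le_max_left n m) hxz) k
  obtain ⟨hzw, dzw⟩ := S.gsN_add_natCast (S.gsN_mono (le_max_right n m) hzw) k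
  exact ⟨_, S.gs0_trans hxz hzw (by linarith)⟩

lemma guN_trans {x z w : X} {n m : ℤ} (hxz : (x, z) ∈ S.GuN n) (hzw : (z, w) ∈ S.GuN m) :
    ∃ k, (x, w) ∈ S.GuN k := by
  simp only [← gsN_reverse] at hxz hzw ⊢
  exact S.reverse.gsN_trans hxz hzw

lemma mem_ga_iff {p : X × X} : p ∈ S.Ga ↔ (∃ n, p ∈ S.GsN n) ∧ ∃ n, p ∈ S.GuN n := by
  refine ⟨fun hp => ?_, fun ⟨⟨n, hs⟩, ⟨m, hu⟩⟩ => ?_⟩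
  · obtain ⟨n, hs, hu⟩ := Set.mem_iUnion.mp hp
    exact ⟨⟨n, hs⟩, ⟨n, hu⟩⟩
  · refine Set.mem_iUnion.mpr ⟨max n.toNat m.toNat, S.gsN_mono ?_ hs, S.guN_mono ?_ hu⟩ <;> omega

lemma ga_refl (x : X) : (x, x) ∈ S.Ga := by
  have hx : dist x x < S.eps := by simpa using S.eps_pos
  exact S.gaN_subset_ga 0 ⟨⟨S.br_self x, hx⟩, ⟨S.br_self x, hx⟩⟩

lemma ga_trans {x z w : X} (hxz : (x, z) ∈ S.Ga) (hzw : (z, w) ∈ S.Ga) : (x, w) ∈ S.Ga := by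
  rw [mem_ga_iff] at hxz hzw ⊢
  obtain ⟨⟨_, hxz_s⟩, ⟨_, hxz_u⟩⟩ := hxz
  obtain ⟨⟨_, hzw_s⟩, ⟨_, hzw_u⟩⟩ := hzw
  exact ⟨S.gsN_trans hxz_s hzw_s, S.guN_trans hxz_u hzw_u⟩

lemma ga_hIter {x z : X} (d : ℤ) (h : (x, z) ∈ S.Ga) :
    (hIter S.phi d x, hIter S.phi d z) ∈ S.Ga := by
  rw [mem_ga_iff] at h ⊢
  obtain ⟨⟨n, hs⟩, ⟨m, hu⟩⟩ := h
  refine ⟨⟨n - d, ?_⟩, ⟨m + d, ?_⟩⟩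
  · show (hIter S.phi (n - d) (hIter S.phi d x), hIter S.phi (n - d) (hIter S.phi d z)) ∈ S.Gs0
    rwa [← hIter_add, ← hIter_add, sub_add_cancel]
  · show (hIter S.phi (-(m + d)) (hIter S.phi d x), hIter S.phi (-(m + d)) (hIter S.phi d z))
      ∈ S.Gu0
    rwa [← hIter_add, ← hIter_add, neg_add, neg_add_cancel_right]

end SmaleSpace

namespace SmaleSpace.ACOEData

variable {X Y : Type*} [MetricSpace X] [CompactSpace X] [MetricSpace Y] [CompactSpace Y]
  {S : SmaleSpace X} {T : SmaleSpace Y} (A : ACOEData S T)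

lemma d₁_self (x : X) : A.d₁ x x = 0 := by
  have := A.d₁_cocycle x x x (S.ga_refl x) (S.ga_refl x)
  omega

lemma hIter_cSum_add_d₁_mem_ga (n : ℤ) {x z : X} (hxz : (hIter S.phi n x, z) ∈ S.Ga) :
    (hIter T.phi (cSum S.phi A.c₁ n x + A.d₁ (hIter S.phi n x) z) (A.h x), A.h z) ∈ T.Ga := by
  have hshift := T.ga_hIter (A.d₁ (hIter S.phi n x) z) (A.xi₁_mem n x)
  rw [← hIter_add, add_comm] at hshift
  exact T.ga_trans hshift (A.eta₁_mem _ _ hxz)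

end SmaleSpace.ACOEData

/-- Under an asymptotic continuous orbit equivalence with data
`(h, c₁, c₂, d₁, d₂)`: (i) if `x` is an asymptotic `p`-periodic point then
`(ψ^{c_h^p(x)}(h(x)), h(x)) ∈ G_ψ^a` where `c_h^p(x) = c₁^p(x) + d₁(φ^p(x),x)`
(so if `c_h^p(x) ≠ 0` then `h(x)` is an asymptotic `c_h^p(x)`-periodic point);
(ii) if `x` is `p`-periodic then `d₁(φ^p(x),x) = 0` and
`(ψ^{c₁^p(x)}(h(x)), h(x)) ∈ G_ψ^a`. -/
theorem acoe_asymptotic_periodic {X Y : Type*} [MetricSpace X] [CompactSpace X]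
    [MetricSpace Y] [CompactSpace Y] (S : SmaleSpace X) (T : SmaleSpace Y)
    (A : SmaleSpace.ACOEData S T) :
    (∀ (p : ℤ) (x : X), p ≠ 0 → (hIter S.phi p x, x) ∈ S.Ga →
      (hIter T.phi (cSum S.phi A.c₁ p x + A.d₁ (hIter S.phi p x) x) (A.h x),
        A.h x) ∈ T.Ga) ∧
    (∀ (p : ℤ) (x : X), p ≠ 0 → hIter S.phi p x = x →
      A.d₁ (hIter S.phi p x) x = 0 ∧
      (hIter T.phi (cSum S.phi A.c₁ p x) (A.h x), A.h x) ∈ T.Ga) := by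
  refine ⟨fun p x _ hx => A.hIter_cSum_add_d₁_mem_ga p hx, fun p x _ hx => ?_⟩
  have hd : A.d₁ (hIter S.phi p x) x = 0 := by rw [hx, A.d₁_self]
  refine ⟨hd, ?_⟩
  have hxx : (hIter S.phi p x, x) ∈ S.Ga := by rw [hx]; exact S.ga_refl x
  simpa only [hd, add_zero] using A.hIter_cSum_add_d₁_mem_ga p hxx
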